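/- For every 1 ≤ i ≤ s−1 one has the inclusion of ideals of ℤ[G]: (𝓘_I + (#I)) · J_{i+1} ⊆ J_i. -/

import Mathlib

/-!
Multiplication by `𝓘_I` maps the summand `Z_{i+1+j} 𝓘_I^j` of `J_{i+1}` onto the summand
`Z_{i+(j+1)} 𝓘_I^{j+1}` of `J_i`. For `#I`, take a generator `∏_{l ∈ T} ν_l` of `Z_{i+1+j}`;
since `#T < s` there is an index `l₀ ∉ T`, and `#I` is a multiple of `#I_{l₀}`. Writing
`#I_{l₀} = ν_{l₀} + (#I_{l₀} - ν_{l₀})`, the first part turns the generator into one of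
`Z_{i+j}`, and the second lies in `𝓘_I` because `ν_{l₀}` maps to `#I_{l₀}` in `ℤ[G/I]`.
-/

open MonoidAlgebra Finset

/-- The sum `ν_H = Σ_{σ ∈ H} σ` of the elements of a subgroup `H` in the group algebra. -/
noncomputable def nuElt (R : Type) [CommRing R] {G : Type} [CommGroup G] [Fintype G]
    (H : Subgroup G) : MonoidAlgebra R G :=
  letI := Classical.decPred (· ∈ H)
  ∑ σ ∈ Finset.univ.filter (· ∈ H), MonoidAlgebra.of R G σ

/-- `I = I_1 × ⋯ × I_s` where `I_l` is the (possibly trivial) cyclic subgroup generated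
by `σ l`: every element of `I` is, in a unique way, the product of elements of the
subgroups `⟨σ l⟩`. -/
def IsDecomp {G : Type} [CommGroup G] (I : Subgroup G) {s : ℕ} (σ : Fin s → G) : Prop :=
  (∀ l, σ l ∈ I) ∧
    ∀ g ∈ I, ∃! x : ∀ l, Subgroup.zpowers (σ l), (∏ l, ((x l : G))) = g

/-- The ideal `Z_i` generated by the products `ν_{l_1} ⋯ ν_{l_{s-i}}` over all
`(s-i)`-element subsets `{l_1 < ⋯ < l_{s-i}}` of `{1, …, s}`. -/
noncomputable def Zideal {G : Type} [CommGroup G] [Fintype G] {s : ℕ} (σ : Fin s → G)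
    (i : ℕ) : Ideal (MonoidAlgebra ℤ G) :=
  Ideal.span {x | ∃ T : Finset (Fin s), T.card = s - i ∧
    x = ∏ l ∈ T, nuElt ℤ (Subgroup.zpowers (σ l))}

/-- The ideal `𝓘_H = ker(ℤ[G] → ℤ[G/H])`. -/
noncomputable def kerIdeal {G : Type} [CommGroup G] [Fintype G] (H : Subgroup G) :
    Ideal (MonoidAlgebra ℤ G) :=
  RingHom.ker (MonoidAlgebra.mapDomainRingHom ℤ (QuotientGroup.mk' H))

/-- The ideal `J_i = Σ_{j=0}^{s-i} Z_{i+j} 𝓘_I^j` (for `1 ≤ i ≤ s`). -/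
noncomputable def Jideal {G : Type} [CommGroup G] [Fintype G] (I : Subgroup G)
    {s : ℕ} (σ : Fin s → G) (i : ℕ) : Ideal (MonoidAlgebra ℤ G) :=
  ∑ j ∈ Finset.range (s - i + 1), Zideal σ (i + j) * (kerIdeal I) ^ j

section

variable {G : Type} [CommGroup G] [Fintype G]

lemma natCard_sub_nuElt_mem_kerIdeal {I H : Subgroup G} (hH : H ≤ I) :
    (Nat.card H : MonoidAlgebra ℤ G) - nuElt ℤ H ∈ kerIdeal I := by
  classical
  have hone : ∀ g ∈ univ.filter (· ∈ H),
      mapDomainRingHom ℤ (QuotientGroup.mk' I) (of ℤ G g) = 1 := fun g hg => by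
    have hg : QuotientGroup.mk' I g = 1 :=
      (QuotientGroup.eq_one_iff g).mpr (hH (mem_filter.mp hg).2)
    change mapDomain (QuotientGroup.mk' I) (single g 1) = 1
    rw [mapDomain_single, hg, one_def]
  have hcard : (univ.filter (· ∈ H)).card = Nat.card H := by
    rw [Nat.card_eq_fintype_card, Fintype.card_subtype]
  rw [kerIdeal, RingHom.mem_ker, map_sub, map_natCast, sub_eq_zero, nuElt, map_sum,
    sum_congr rfl hone, sum_const, hcard, nsmul_one]

variable {s : ℕ} (σ : Fin s → G)

lemma prod_nuElt_mem_Zideal {k : ℕ} {T : Finset (Fin s)} (hT : T.card = s - k) :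
    ∏ l ∈ T, nuElt ℤ (Subgroup.zpowers (σ l)) ∈ Zideal σ k :=
  Ideal.subset_span ⟨T, hT, rfl⟩

lemma natCard_mul_prod_nuElt_mem {I : Subgroup G} (hσ : ∀ l, σ l ∈ I) {k : ℕ} (hk : k < s)
    {T : Finset (Fin s)} (hT : T.card = s - (k + 1)) :
    (Nat.card I : MonoidAlgebra ℤ G) * ∏ l ∈ T, nuElt ℤ (Subgroup.zpowers (σ l)) ∈
      Zideal σ k + Zideal σ (k + 1) * kerIdeal I := by
  obtain ⟨l₀, hl₀⟩ : Tᶜ.Nonempty := by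
    rw [← card_pos, card_compl, hT, Fintype.card_fin]; omega
  have hl₀T : l₀ ∉ T := mem_compl.mp hl₀
  set H := Subgroup.zpowers (σ l₀)
  have hHI : H ≤ I := Subgroup.zpowers_le.mpr (hσ l₀)
  obtain ⟨m, hm⟩ := Subgroup.card_dvd_of_le hHI
  set P := ∏ l ∈ T, nuElt ℤ (Subgroup.zpowers (σ l))
  have hsplit : (Nat.card I : MonoidAlgebra ℤ G) * P =
      m * (nuElt ℤ H * P + P * ((Nat.card H : MonoidAlgebra ℤ G) - nuElt ℤ H)) := by
    rw [hm]; push_cast; ring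
  have hνP : nuElt ℤ H * P ∈ Zideal σ k := by
    have hmem := prod_nuElt_mem_Zideal σ (k := k) (T := insert l₀ T)
      (by rw [card_insert_of_notMem hl₀T, hT]; omega)
    rwa [prod_insert hl₀T] at hmem
  rw [hsplit, Submodule.add_eq_sup]
  exact Ideal.mul_mem_left _ _ (Submodule.add_mem _ (Submodule.mem_sup_left hνP)
    (Submodule.mem_sup_right (Ideal.mul_mem_mul (prod_nuElt_mem_Zideal σ hT)
      (natCard_sub_nuElt_mem_kerIdeal hHI))))

lemma span_natCard_mul_Zideal_succ_le {I : Subgroup G} (hσ : ∀ l, σ l ∈ I) {k : ℕ}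
    (hk : k < s) :
    Ideal.span {(Nat.card I : MonoidAlgebra ℤ G)} * Zideal σ (k + 1) ≤
      Zideal σ k + Zideal σ (k + 1) * kerIdeal I := by
  rw [Zideal, Ideal.span_mul_span, Ideal.span_le]
  rintro _ ⟨_, rfl, _, ⟨T, hT, rfl⟩, rfl⟩
  exact natCard_mul_prod_nuElt_mem σ hσ hk hT

lemma Zideal_mul_kerIdeal_pow_le_Jideal (I : Subgroup G) {i j : ℕ} (hj : j ≤ s - i) :
    Zideal σ (i + j) * kerIdeal I ^ j ≤ Jideal I σ i :=
  single_le_sum (f := fun j => Zideal σ (i + j) * kerIdeal I ^ j)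
    (fun _ _ => zero_le) (mem_range.mpr (by omega))

lemma kerIdeal_mul_Jideal_succ_le (I : Subgroup G) {i : ℕ} (hi : i < s) :
    kerIdeal I * Jideal I σ (i + 1) ≤ Jideal I σ i := by
  rw [Jideal, mul_sum, Ideal.sum_eq_sup, Finset.sup_le_iff]
  intro j hj
  rw [mem_range] at hj
  calc kerIdeal I * (Zideal σ (i + 1 + j) * kerIdeal I ^ j)
      = Zideal σ (i + (j + 1)) * kerIdeal I ^ (j + 1) := by
        rw [show i + 1 + j = i + (j + 1) by omega, pow_succ]; ring
    _ ≤ Jideal I σ i := Zideal_mul_kerIdeal_pow_le_Jideal σ I (by omega)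

lemma span_natCard_mul_Jideal_succ_le {I : Subgroup G} (hσ : ∀ l, σ l ∈ I) {i : ℕ}
    (hi : i < s) :
    Ideal.span {(Nat.card I : MonoidAlgebra ℤ G)} * Jideal I σ (i + 1) ≤ Jideal I σ i := by
  rw [Jideal, mul_sum, Ideal.sum_eq_sup, Finset.sup_le_iff]
  intro j hj
  rw [mem_range] at hj
  calc Ideal.span {(Nat.card I : MonoidAlgebra ℤ G)} * (Zideal σ (i + 1 + j) * kerIdeal I ^ j)
      = Ideal.span {(Nat.card I : MonoidAlgebra ℤ G)} * Zideal σ (i + j + 1) *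
          kerIdeal I ^ j := by
        rw [show i + 1 + j = i + j + 1 by omega, mul_assoc]
    _ ≤ (Zideal σ (i + j) + Zideal σ (i + j + 1) * kerIdeal I) * kerIdeal I ^ j :=
        Ideal.mul_mono_left (span_natCard_mul_Zideal_succ_le σ hσ (by omega))
    _ = Zideal σ (i + j) * kerIdeal I ^ j + Zideal σ (i + (j + 1)) * kerIdeal I ^ (j + 1) := by
        rw [show i + j + 1 = i + (j + 1) by omega, add_mul, mul_assoc, ← pow_succ']
    _ ≤ Jideal I σ i := by
        rw [Submodule.add_eq_sup]
        exact sup_le (Zideal_mul_kerIdeal_pow_le_Jideal σ I (by omega))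
          (Zideal_mul_kerIdeal_pow_le_Jideal σ I (by omega))

end

theorem statement11 {G : Type} [CommGroup G] [Fintype G] (I : Subgroup G)
    {s : ℕ} (σ : Fin s → G) (hdec : IsDecomp I σ) (i : ℕ) (h1 : 1 ≤ i) (h2 : i ≤ s - 1) :
    (kerIdeal I ⊔ Ideal.span {(Nat.card I : MonoidAlgebra ℤ G)}) * Jideal I σ (i + 1)
      ≤ Jideal I σ i := by
  have hi : i < s := by omega
  rw [Ideal.sup_mul]
  exact sup_le (kerIdeal_mul_Jideal_succ_le σ I hi) (span_natCard_mul_Jideal_succ_le σ hdec.1 hi)
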